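/- Assume the series X₀ converges almost surely, −∞ < E[log|c(ε₀)|] < 0, and for some μ > 0, E[|c(ε₀)|^μ] < 1 and E[|g(ε₀)|^μ] < ∞. Then there exist α₀ > 0 and, for each 0 < α ≤ α₀, constants C₆ > 0 and ρ > 0 such that for every k ∈ ℤ and every m ≥ 1, P(|X_k − X_{k,m}| > e^{−αm}) ≤ C₆ e^{−ρm}. -/

import Mathlib

/-!
Take `p = min μ 1`. Since `p ≤ 1`, `x ↦ |x|^p` is subadditive, so `E|X_k − X_{k,m}|^p` is at most
the sum over `i ≥ m` of the `p`-th moments of the summands. By independence and identical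
distribution the `i`-th summand has `p`-th moment `E|g(ε₀)|^p · (E|c(ε₀)|^p)^i`, and
`E|c(ε₀)|^p < 1` by Lyapunov's inequality, so this tail moment decays geometrically in `m`.
Markov's inequality at level `e^{−αm}` costs a factor `e^{αpm}`, which the geometric decay absorbs
once `α` is small.
-/

open MeasureTheory ProbabilityTheory Filter

open scoped ENNReal Topology

lemma ofReal_abs_rpow_eq_enorm_rpow (x : ℝ) {p : ℝ} (hp : 0 ≤ p) :
    ENNReal.ofReal (|x| ^ p) = ‖x‖ₑ ^ p := by
  rw [Real.enorm_eq_ofReal_abs, ENNReal.ofReal_rpow_of_nonneg (abs_nonneg x) hp]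

lemma enorm_sum_rpow_le_sum_enorm_rpow {ι E : Type*} [NormedAddCommGroup E]
    (s : Finset ι) (a : ι → E) {p : ℝ} (hp0 : 0 < p) (hp1 : p ≤ 1) :
    ‖∑ i ∈ s, a i‖ₑ ^ p ≤ ∑ i ∈ s, ‖a i‖ₑ ^ p := by
  classical
  induction s using Finset.induction_on with
  | empty => simp [hp0]
  | insert b s hb ih =>
    rw [Finset.sum_insert hb, Finset.sum_insert hb]
    calc ‖a b + ∑ i ∈ s, a i‖ₑ ^ p ≤ (‖a b‖ₑ + ‖∑ i ∈ s, a i‖ₑ) ^ p := by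
          gcongr; exact enorm_add_le _ _
      _ ≤ ‖a b‖ₑ ^ p + ‖∑ i ∈ s, a i‖ₑ ^ p := ENNReal.rpow_add_le_add_rpow _ _ hp0.le hp1
      _ ≤ ‖a b‖ₑ ^ p + ∑ i ∈ s, ‖a i‖ₑ ^ p := by gcongr

lemma enorm_rpow_sub_sum_range_le_tsum {E : Type*} [NormedAddCommGroup E] {a : ℕ → E} {x : E}
    (hx : Tendsto (fun n => ∑ i ∈ Finset.range n, a i) atTop (𝓝 x)) {p : ℝ} (hp0 : 0 < p)
    (hp1 : p ≤ 1) (m : ℕ) :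
    ‖x - ∑ i ∈ Finset.range m, a i‖ₑ ^ p ≤ ∑' i, ‖a (m + i)‖ₑ ^ p := by
  have hlim : Tendsto (fun n => ‖∑ i ∈ Finset.range (n + m), a i - ∑ i ∈ Finset.range m, a i‖ₑ ^ p)
      atTop (𝓝 (‖x - ∑ i ∈ Finset.range m, a i‖ₑ ^ p)) :=
    ((ENNReal.continuous_rpow_const.comp continuous_enorm).tendsto _).comp
      ((hx.comp (tendsto_add_atTop_nat m)).sub_const _)
  refine le_of_tendsto' hlim fun n => ?_
  rw [add_comm n m, Finset.sum_range_add, add_sub_cancel_left]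
  exact (enorm_sum_rpow_le_sum_enorm_rpow _ _ hp0 hp1).trans (ENNReal.sum_le_tsum _)

lemma lintegral_enorm_rpow_sub_sum_range_le {Ω E : Type*} [MeasurableSpace Ω] {P : Measure Ω}
    [NormedAddCommGroup E] {f : ℕ → Ω → E} {S : Ω → E} (hf : ∀ i, AEStronglyMeasurable (f i) P)
    (hS : ∀ᵐ ω ∂P, Tendsto (fun n => ∑ i ∈ Finset.range n, f i ω) atTop (𝓝 (S ω)))
    {p : ℝ} (hp0 : 0 < p) (hp1 : p ≤ 1) (m : ℕ) :
    ∫⁻ ω, ‖S ω - ∑ i ∈ Finset.range m, f i ω‖ₑ ^ p ∂P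
      ≤ ∑' i, ∫⁻ ω, ‖f (m + i) ω‖ₑ ^ p ∂P := by
  rw [← lintegral_tsum fun i => (hf (m + i)).enorm.pow_const p]
  exact lintegral_mono_ae <| hS.mono fun ω hω => enorm_rpow_sub_sum_range_le_tsum hω hp0 hp1 m

section Moments

variable {Ω E : Type*} [MeasurableSpace Ω] {P : Measure Ω} [NormedAddCommGroup E] {f : Ω → E}
  {p q : ℝ}

lemma lintegral_enorm_rpow_lt_one_of_exponent_le [IsProbabilityMeasure P]
    (hf : AEStronglyMeasurable f P) (hp : 0 < p) (hpq : p ≤ q)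
    (hq : ∫⁻ ω, ‖f ω‖ₑ ^ q ∂P < 1) : ∫⁻ ω, ‖f ω‖ₑ ^ p ∂P < 1 := by
  have hLyapunov := eLpNorm'_le_eLpNorm'_of_exponent_le hp hpq P hf
  rw [eLpNorm'_eq_lintegral_enorm, eLpNorm'_eq_lintegral_enorm] at hLyapunov
  have hq' : (∫⁻ ω, ‖f ω‖ₑ ^ q ∂P) ^ (1 / q) < 1 :=
    ENNReal.rpow_lt_one hq (by have := hp.trans_le hpq; positivity)
  simpa [ENNReal.rpow_inv_lt_iff hp] using hLyapunov.trans_lt hq'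

lemma lintegral_enorm_rpow_lt_top_of_exponent_le [IsFiniteMeasure P]
    (hf : AEStronglyMeasurable f P) (hp : 0 < p) (hpq : p ≤ q)
    (hq : ∫⁻ ω, ‖f ω‖ₑ ^ q ∂P < ∞) : ∫⁻ ω, ‖f ω‖ₑ ^ p ∂P < ∞ := by
  have hq0 : 0 < 1 / q := by have := hp.trans_le hpq; positivity
  have h := eLpNorm'_lt_top_of_eLpNorm'_lt_top_of_exponent_le hf
    ((ENNReal.rpow_lt_top_iff_of_pos hq0).2 hq) hp.le hpq
  exact (ENNReal.rpow_lt_top_iff_of_pos (one_div_pos.2 hp)).1 h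

end Moments

lemma ProbabilityTheory.iIndepFun.lintegral_comp_mul_prod_comp {Ω ι β : Type*}
    [MeasurableSpace Ω] {P : Measure Ω} [MeasurableSpace β] {Y : ι → Ω → β}
    (hY : iIndepFun Y P) (hYm : ∀ i, Measurable (Y i)) {u v : β → ℝ≥0∞}
    (hu : Measurable u) (hv : Measurable v) {a : ι} {s : Finset ι} (ha : a ∉ s) :
    ∫⁻ ω, u (Y a ω) * ∏ j ∈ s, v (Y j ω) ∂P
      = (∫⁻ ω, u (Y a ω) ∂P) * ∏ j ∈ s, ∫⁻ ω, v (Y j ω) ∂P := by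
  classical
  let h : ι → β → ℝ≥0∞ := fun j => if j = a then u else v
  have hh : ∀ j, Measurable (h j) := fun j => by unfold h; split_ifs <;> assumption
  have hv_mem : ∀ j ∈ s, h j = v := fun j hj => if_neg (ne_of_mem_of_not_mem hj ha)
  have hv_on : ∀ ω, ∏ j ∈ s, h j (Y j ω) = ∏ j ∈ s, v (Y j ω) := fun ω =>
    Finset.prod_congr rfl fun j hj => by rw [hv_mem j hj]
  have hv_int : ∏ j ∈ s, ∫⁻ ω, h j (Y j ω) ∂P = ∏ j ∈ s, ∫⁻ ω, v (Y j ω) ∂P :=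
    Finset.prod_congr rfl fun j hj => by rw [hv_mem j hj]
  have hprod := lintegral_prod_eq_prod_lintegral_of_indepFun (insert a s)
    (fun j => h j ∘ Y j) (hY.comp h hh) fun j => (hh j).comp (hYm j)
  simpa only [Finset.prod_insert ha, Function.comp_apply, hv_on, hv_int, h, if_pos] using hprod

section GarchTerm

variable {Ω : Type*} [MeasurableSpace Ω] {P : Measure Ω}

def garchTerm (ε : ℤ → Ω → ℝ) (c g : ℝ → ℝ) (k : ℤ) (i : ℕ) (ω : Ω) : ℝ :=
  g (ε (k - (i + 1)) ω) * ∏ j ∈ Finset.range i, c (ε (k - (j + 1)) ω)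

lemma measurable_garchTerm {ε : ℤ → Ω → ℝ} {c g : ℝ → ℝ} (hc : Measurable c) (hg : Measurable g)
    (hε : ∀ k, Measurable (ε k)) (k : ℤ) (i : ℕ) : Measurable (garchTerm ε c g k i) :=
  (hg.comp (hε _)).mul (Finset.measurable_prod _ fun _ _ => hc.comp (hε _))

lemma lintegral_enorm_rpow_garchTerm {ε : ℤ → Ω → ℝ} {c g : ℝ → ℝ} (hc : Measurable c)
    (hg : Measurable g) (hε : ∀ k, Measurable (ε k)) (hindep : iIndepFun ε P)
    (hident : ∀ k, IdentDistrib (ε k) (ε 0) P P) {p : ℝ} (hp : 0 ≤ p) (k : ℤ) (i : ℕ) :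
    ∫⁻ ω, ‖garchTerm ε c g k i ω‖ₑ ^ p ∂P
      = (∫⁻ ω, ‖g (ε 0 ω)‖ₑ ^ p ∂P) * (∫⁻ ω, ‖c (ε 0 ω)‖ₑ ^ p ∂P) ^ i := by
  have hinj : Function.Injective fun j : ℕ => k - (j + 1) := fun j₁ j₂ h => by
    simp only at h; omega
  have hmeas : ∀ {f : ℝ → ℝ}, Measurable f → Measurable fun x => ‖f x‖ₑ ^ p :=
    fun hf => (hf.enorm).pow_const p
  have hlaw : ∀ {f : ℝ → ℝ}, Measurable f → ∀ j,
      ∫⁻ ω, ‖f (ε j ω)‖ₑ ^ p ∂P = ∫⁻ ω, ‖f (ε 0 ω)‖ₑ ^ p ∂P :=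
    fun hf j => ((hident j).comp (hmeas hf)).lintegral_eq
  have hsplit : ∀ ω, ‖garchTerm ε c g k i ω‖ₑ ^ p
      = ‖g (ε (k - (i + 1)) ω)‖ₑ ^ p * ∏ j ∈ Finset.range i, ‖c (ε (k - (j + 1)) ω)‖ₑ ^ p := by
    intro ω
    rw [garchTerm, enorm_mul, ENNReal.mul_rpow_of_nonneg _ _ hp, ENNReal.prod_rpow_of_nonneg hp]
    simp [enorm_eq_nnnorm, nnnorm_prod]
  simp_rw [hsplit]
  rw [(hindep.precomp hinj).lintegral_comp_mul_prod_comp (fun j => hε _) (hmeas hg) (hmeas hc)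
    Finset.notMem_range_self, hlaw hg, Finset.prod_congr rfl fun j _ => hlaw hc _,
    Finset.prod_const, Finset.card_range]

end GarchTerm

section TailBound

variable {Ω ι : Type*} [MeasurableSpace Ω] {P : Measure Ω}

lemma measure_lt_abs_le_lintegral_enorm_rpow_div {f : Ω → ℝ} (hf : AEMeasurable f P)
    {p b : ℝ} (hp : 0 < p) (hb : 0 < b) :
    P {ω | b < |f ω|} ≤ (∫⁻ ω, ‖f ω‖ₑ ^ p ∂P) / ENNReal.ofReal (b ^ p) := by
  refine (measure_mono fun ω (hω : b < |f ω|) => ?_).trans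
    (meas_ge_le_lintegral_div (hf.enorm.pow_const p) (ENNReal.ofReal_pos.2 (by positivity)).ne'
      ENNReal.ofReal_ne_top)
  show ENNReal.ofReal (b ^ p) ≤ ‖f ω‖ₑ ^ p
  rw [← ofReal_abs_rpow_eq_enorm_rpow _ hp.le]
  exact ENNReal.ofReal_le_ofReal (Real.rpow_le_rpow hb.le hω.le hp.le)

lemma exists_exp_tail_bound_of_lintegral_enorm_rpow_le_exp {Y : ι → ℕ → Ω → ℝ}
    (hY : ∀ k m, AEMeasurable (Y k m) P) {p K l : ℝ} (hp : 0 < p) (hK : 0 < K) (hl : 0 < l)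
    (hmom : ∀ k m, ∫⁻ ω, ‖Y k m ω‖ₑ ^ p ∂P ≤ ENNReal.ofReal (K * Real.exp (-l * m))) :
    ∃ α₀ > (0 : ℝ), ∀ α : ℝ, 0 < α → α ≤ α₀ →
      ∃ C₆ > (0 : ℝ), ∃ ρ > (0 : ℝ), ∀ k m,
        P {ω | |Y k m ω| > Real.exp (-α * m)} ≤ ENNReal.ofReal (C₆ * Real.exp (-ρ * m)) := by
  refine ⟨l / (2 * p), by positivity, fun α hα hαl => ⟨K, hK, l - α * p, ?_, fun k m => ?_⟩⟩
  · have hαp : α * p ≤ l / 2 :=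
      calc α * p ≤ l / (2 * p) * p := by gcongr
        _ = l / 2 := by field_simp
    linarith
  calc P {ω | |Y k m ω| > Real.exp (-α * m)}
      ≤ (∫⁻ ω, ‖Y k m ω‖ₑ ^ p ∂P) / ENNReal.ofReal (Real.exp (-α * m) ^ p) :=
        measure_lt_abs_le_lintegral_enorm_rpow_div (hY k m) hp (Real.exp_pos _)
    _ ≤ ENNReal.ofReal (K * Real.exp (-l * m)) / ENNReal.ofReal (Real.exp (-α * m) ^ p) := by
        gcongr; exact hmom k m
    _ = ENNReal.ofReal (K * Real.exp (-(l - α * p) * m)) := by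
        rw [← ENNReal.ofReal_div_of_pos (by positivity), ← Real.exp_mul, mul_div_assoc,
          ← Real.exp_sub]
        ring_nf

lemma exists_exp_tail_bound_of_lintegral_enorm_rpow_le_geometric {Y : ι → ℕ → Ω → ℝ}
    (hY : ∀ k m, AEMeasurable (Y k m) P) {p : ℝ} (hp : 0 < p) {K r : ℝ≥0∞} (hK : K ≠ ∞)
    (hr : r < 1) (hmom : ∀ k m, ∫⁻ ω, ‖Y k m ω‖ₑ ^ p ∂P ≤ K * r ^ m) :
    ∃ α₀ > (0 : ℝ), ∀ α : ℝ, 0 < α → α ≤ α₀ →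
      ∃ C₆ > (0 : ℝ), ∃ ρ > (0 : ℝ), ∀ k m,
        P {ω | |Y k m ω| > Real.exp (-α * m)} ≤ ENNReal.ofReal (C₆ * Real.exp (-ρ * m)) := by
  set r' := max r.toReal (1 / 2)
  have hr'0 : 0 < r' := lt_max_of_lt_right one_half_pos
  have hr'1 : r' < 1 := max_lt (ENNReal.toReal_lt_of_lt_ofReal (by simpa using hr)) one_half_lt_one
  refine exists_exp_tail_bound_of_lintegral_enorm_rpow_le_exp hY hp
    (K := K.toReal + 1) (l := -Real.log r') (by positivity)
    (neg_pos.2 (Real.log_neg hr'0 hr'1)) fun k m => (hmom k m).trans ?_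
  rw [neg_neg, mul_comm _ (m : ℝ), Real.exp_nat_mul, Real.exp_log hr'0,
    ENNReal.ofReal_mul (by positivity), ENNReal.ofReal_pow hr'0.le]
  gcongr
  · exact (ENNReal.ofReal_toReal hK).symm.le.trans (ENNReal.ofReal_le_ofReal (by linarith))
  · exact ENNReal.le_ofReal_iff_toReal_le (hr.trans ENNReal.one_lt_top).ne hr'0.le |>.2
      (le_max_left _ _)

end TailBound

theorem augmented_garch_exponential_tail_rate_general
    {Ω : Type*} [MeasurableSpace Ω] (P : Measure Ω) [IsProbabilityMeasure P]
    (ε : ℤ → Ω → ℝ) (c g : ℝ → ℝ)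
    (hc : Measurable c) (hg : Measurable g)
    (hεmeas : ∀ k, Measurable (ε k))
    (hindep : iIndepFun ε P)
    (hident : ∀ k, IdentDistrib (ε k) (ε 0) P P)
    (μ : ℝ) (hμ : 0 < μ)
    (hcmom : ∫⁻ ω, ENNReal.ofReal (|c (ε 0 ω)| ^ μ) ∂P < 1)
    (hgmom : ∫⁻ ω, ENNReal.ofReal (|g (ε 0 ω)| ^ μ) ∂P < ⊤)
    (X : ℤ → Ω → ℝ)
    (hX : ∀ k : ℤ, ∀ᵐ ω ∂P, Tendsto
      (fun m => ∑ i ∈ Finset.range m,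
        g (ε (k - (i + 1)) ω) * ∏ j ∈ Finset.range i, c (ε (k - (j + 1)) ω))
      atTop (nhds (X k ω)))
    (Xm : ℤ → ℕ → Ω → ℝ)
    (hXm : ∀ k m ω, Xm k m ω = ∑ i ∈ Finset.range m,
      g (ε (k - (i + 1)) ω) * ∏ j ∈ Finset.range i, c (ε (k - (j + 1)) ω)) :
    ∃ α₀ > (0 : ℝ), ∀ α : ℝ, 0 < α → α ≤ α₀ →
      ∃ C₆ > (0 : ℝ), ∃ ρ > (0 : ℝ), ∀ k : ℤ, ∀ m : ℕ, 1 ≤ m →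
        P {ω | |X k ω - Xm k m ω| > Real.exp (-α * m)} ≤
          ENNReal.ofReal (C₆ * Real.exp (-ρ * m)) := by
  set p := min μ 1
  have hp : 0 < p := lt_min hμ one_pos
  simp_rw [ofReal_abs_rpow_eq_enorm_rpow _ hμ.le] at hcmom hgmom
  set C := ∫⁻ ω, ‖c (ε 0 ω)‖ₑ ^ p ∂P
  set G := ∫⁻ ω, ‖g (ε 0 ω)‖ₑ ^ p ∂P
  have hC : C < 1 := lintegral_enorm_rpow_lt_one_of_exponent_le
    (hc.comp (hεmeas 0)).aestronglyMeasurable hp (min_le_left _ _) hcmom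
  have hG : G < ∞ := lintegral_enorm_rpow_lt_top_of_exponent_le
    (hg.comp (hεmeas 0)).aestronglyMeasurable hp (min_le_left _ _) hgmom
  have hterm := measurable_garchTerm hc hg hεmeas
  have htail : ∀ k m, ∫⁻ ω, ‖X k ω - Xm k m ω‖ₑ ^ p ∂P ≤ G * (1 - C)⁻¹ * C ^ m := fun k m =>
    calc ∫⁻ ω, ‖X k ω - Xm k m ω‖ₑ ^ p ∂P
        ≤ ∑' i, ∫⁻ ω, ‖garchTerm ε c g k (m + i) ω‖ₑ ^ p ∂P := by
          simp only [hXm]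
          exact lintegral_enorm_rpow_sub_sum_range_le (fun i => (hterm k i).aestronglyMeasurable)
            (hX k) hp (min_le_right _ _) m
      _ = ∑' i, G * C ^ (m + i) :=
          tsum_congr fun i => lintegral_enorm_rpow_garchTerm hc hg hεmeas hindep hident hp.le _ _
      _ = G * (1 - C)⁻¹ * C ^ m := by
          simp_rw [pow_add, ENNReal.tsum_mul_left, ENNReal.tsum_geometric]; ring
  have hpartial : ∀ k m, Measurable fun ω => ∑ i ∈ Finset.range m, garchTerm ε c g k i ω :=
    fun k m => Finset.measurable_sum _ fun i _ => hterm k i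
  have hmeas : ∀ k m, AEMeasurable (fun ω => X k ω - Xm k m ω) P := fun k m =>
    (aemeasurable_of_tendsto_metrizable_ae atTop (fun n => (hpartial k n).aemeasurable) (hX k)).sub
      (funext (hXm k m) ▸ (hpartial k m).aemeasurable)
  obtain ⟨α₀, hα₀, hbound⟩ := exists_exp_tail_bound_of_lintegral_enorm_rpow_le_geometric hmeas hp
    (ENNReal.mul_ne_top hG.ne (ENNReal.inv_ne_top.2 (tsub_pos_of_lt hC).ne')) hC htail
  exact ⟨α₀, hα₀, fun α hα hαα₀ => (hbound α hα hαα₀).imp fun C₆ ⟨hC₆, ρ, hρ, hρbound⟩ =>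
    ⟨hC₆, ρ, hρ, fun k m _ => hρbound k m⟩⟩

/-- **Lemma 5.** If `−∞ < E log|c(ε₀)| < 0` and, for some `μ > 0`, `E|c(ε₀)|^μ < 1` and
`E|g(ε₀)|^μ < ∞`, then for all sufficiently small `α > 0` there are constants `C₆, ρ > 0`
with `P(|X_k − X_{k,m}| > e^{−αm}) ≤ C₆ e^{−ρm}` for all `k`, `m ≥ 1`. -/
theorem augmented_garch_exponential_tail_rate
    {Ω : Type*} [MeasurableSpace Ω] (P : Measure Ω) [IsProbabilityMeasure P]
    (ε : ℤ → Ω → ℝ) (c g : ℝ → ℝ)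
    (hc : Measurable c) (hg : Measurable g)
    (hεmeas : ∀ k, Measurable (ε k))
    (hindep : iIndepFun ε P)
    (hident : ∀ k, IdentDistrib (ε k) (ε 0) P P)
    (hlogint : Integrable (fun ω => Real.log |c (ε 0 ω)|) P)
    (hlogneg : ∫ ω, Real.log |c (ε 0 ω)| ∂P < 0)
    (μ : ℝ) (hμ : 0 < μ)
    (hcmom : ∫⁻ ω, ENNReal.ofReal (|c (ε 0 ω)| ^ μ) ∂P < 1)
    (hgmom : ∫⁻ ω, ENNReal.ofReal (|g (ε 0 ω)| ^ μ) ∂P < ⊤)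
    (X : ℤ → Ω → ℝ) (hXmeas : ∀ k, Measurable (X k))
    (hX : ∀ k : ℤ, ∀ᵐ ω ∂P, Tendsto
      (fun m => ∑ i ∈ Finset.range m,
        g (ε (k - (i + 1)) ω) * ∏ j ∈ Finset.range i, c (ε (k - (j + 1)) ω))
      atTop (nhds (X k ω)))
    (Xm : ℤ → ℕ → Ω → ℝ)
    (hXm : ∀ k m ω, Xm k m ω = ∑ i ∈ Finset.range m,
      g (ε (k - (i + 1)) ω) * ∏ j ∈ Finset.range i, c (ε (k - (j + 1)) ω)) :
    ∃ α₀ > (0 : ℝ), ∀ α : ℝ, 0 < α → α ≤ α₀ →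
      ∃ C₆ > (0 : ℝ), ∃ ρ > (0 : ℝ), ∀ k : ℤ, ∀ m : ℕ, 1 ≤ m →
        P {ω | |X k ω - Xm k m ω| > Real.exp (-α * m)} ≤
          ENNReal.ofReal (C₆ * Real.exp (-ρ * m)) :=
  augmented_garch_exponential_tail_rate_general P ε c g hc hg hεmeas hindep hident μ hμ hcmom hgmom
    X hX Xm hXm
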